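/- arXiv:2311.02405 — 11 statements merged into one kernel-verified Lean document; each statement's English description precedes it below -/
import Mathlib

section
/- For positive reals B, SNR1, SNR2, the grouped latency 2B / log₂(1+SNR1+SNR2) is strictly smaller than the sum of individual latencies B / log₂(1+SNR1) + B / log₂(1+SNR2). -/
theorem stmt_2 (B SNR1 SNR2 : ℝ) (hB : 0 < B) (h1 : 0 < SNR1) (h2 : 0 < SNR2) :
    2 * B / Real.logb 2 (1 + SNR1 + SNR2) <
      B / Real.logb 2 (1 + SNR1) + B / Real.logb 2 (1 + SNR2) := by
  have hx1 : (1:ℝ) < 1 + SNR1 := by linarith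
  have hx2 : (1:ℝ) < 1 + SNR2 := by linarith
  have hL1 : 0 < Real.logb 2 (1 + SNR1) := Real.logb_pos one_lt_two hx1
  have hL2 : 0 < Real.logb 2 (1 + SNR2) := Real.logb_pos one_lt_two hx2
  have hlt1 : Real.logb 2 (1 + SNR1) < Real.logb 2 (1 + SNR1 + SNR2) :=
    Real.logb_lt_logb one_lt_two (by linarith) (by linarith)
  have hlt2 : Real.logb 2 (1 + SNR2) < Real.logb 2 (1 + SNR1 + SNR2) :=
    Real.logb_lt_logb one_lt_two (by linarith) (by linarith)
  have hL : 0 < Real.logb 2 (1 + SNR1 + SNR2) := lt_trans hL1 hlt1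
  have e : 2 * B / Real.logb 2 (1 + SNR1 + SNR2)
      = B / Real.logb 2 (1 + SNR1 + SNR2) + B / Real.logb 2 (1 + SNR1 + SNR2) := by
    ring
  rw [e]
  exact add_lt_add (div_lt_div_of_pos_left hB hL1 hlt1) (div_lt_div_of_pos_left hB hL2 hlt2)
end

section
/- For positive reals B, SNR1, SNR2, the quantity max{ 2B / log₂(1+SNR1+SNR2), B / log₂(1+min{SNR1,SNR2}) } is strictly smaller than B / log₂(1+SNR1) + B / log₂(1+SNR2). -/
theorem stmt_3 (B SNR1 SNR2 : ℝ) (hB : 0 < B) (h1 : 0 < SNR1) (h2 : 0 < SNR2) :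
    max (2 * B / Real.logb 2 (1 + SNR1 + SNR2))
        (B / Real.logb 2 (1 + min SNR1 SNR2)) <
      B / Real.logb 2 (1 + SNR1) + B / Real.logb 2 (1 + SNR2) := by
  have hL1 : 0 < Real.logb 2 (1 + SNR1) := Real.logb_pos one_lt_two (by linarith)
  have hL2 : 0 < Real.logb 2 (1 + SNR2) := Real.logb_pos one_lt_two (by linarith)
  have h1s : Real.logb 2 (1 + SNR1) < Real.logb 2 (1 + SNR1 + SNR2) :=
    Real.logb_lt_logb one_lt_two (by linarith) (by linarith)
  have h2s : Real.logb 2 (1 + SNR2) < Real.logb 2 (1 + SNR1 + SNR2) :=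
    Real.logb_lt_logb one_lt_two (by linarith) (by linarith)
  apply max_lt
  · have a1 : B / Real.logb 2 (1 + SNR1 + SNR2) < B / Real.logb 2 (1 + SNR1) :=
      div_lt_div_of_pos_left hB hL1 h1s
    have a2 : B / Real.logb 2 (1 + SNR1 + SNR2) < B / Real.logb 2 (1 + SNR2) :=
      div_lt_div_of_pos_left hB hL2 h2s
    have e : 2 * B / Real.logb 2 (1 + SNR1 + SNR2) =
        B / Real.logb 2 (1 + SNR1 + SNR2) + B / Real.logb 2 (1 + SNR1 + SNR2) := by ring
    linarith
  · have p1 : 0 < B / Real.logb 2 (1 + SNR1) := div_pos hB hL1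
    have p2 : 0 < B / Real.logb 2 (1 + SNR2) := div_pos hB hL2
    rcases le_total SNR1 SNR2 with h | h
    · rw [min_eq_left h]; linarith
    · rw [min_eq_right h]; linarith
end

section
/- Let SNR1, SNR2, B be positive reals. For every pair (R1,R2) with 0 < R1 ≤ log₂(1+SNR1), 0 < R2 ≤ log₂(1+SNR2), and R1+R2 ≤ log₂(1+SNR1+SNR2), one has max{B/R1, B/R2} ≥ max{ 2B/log₂(1+SNR1+SNR2), B/log₂(1+min{SNR1,SNR2}) }. -/
theorem stmt_5 (SNR1 SNR2 B : ℝ) (h1 : 0 < SNR1) (h2 : 0 < SNR2) (hB : 0 < B)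
    (R1 R2 : ℝ) (hR1 : 0 < R1) (hR1' : R1 ≤ Real.logb 2 (1 + SNR1))
    (hR2 : 0 < R2) (hR2' : R2 ≤ Real.logb 2 (1 + SNR2))
    (hsum : R1 + R2 ≤ Real.logb 2 (1 + SNR1 + SNR2)) :
    max (B / R1) (B / R2) ≥
      max (2 * B / Real.logb 2 (1 + SNR1 + SNR2))
          (B / Real.logb 2 (1 + min SNR1 SNR2)) := by
  have hm : 0 < min R1 R2 := lt_min hR1 hR2
  have hmax : max (B / R1) (B / R2) = B / min R1 R2 := by
    rcases le_total R1 R2 with h | h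
    · rw [min_eq_left h, max_eq_left (div_le_div_of_nonneg_left hB.le hR1 h)]
    · rw [min_eq_right h, max_eq_right (div_le_div_of_nonneg_left hB.le hR2 h)]
  rw [hmax, ge_iff_le, max_le_iff]
  have hL : 0 < Real.logb 2 (1 + SNR1 + SNR2) := lt_of_lt_of_le (by linarith) hsum
  constructor
  · rw [div_le_div_iff₀ hL hm]
    have : 2 * min R1 R2 ≤ R1 + R2 := by
      rcases le_total R1 R2 with h | h <;> simp [min_eq_left, min_eq_right, h] <;> linarith
    nlinarith
  · have hlog : 0 < Real.logb 2 (1 + min SNR1 SNR2) :=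
      Real.logb_pos one_lt_two (by rcases le_total SNR1 SNR2 with h | h <;>
        simp [min_eq_left, min_eq_right, h] <;> linarith)
    apply div_le_div_of_nonneg_left hB.le hm
    rcases le_total SNR1 SNR2 with h | h
    · rw [min_eq_left h]; exact le_trans (min_le_left _ _) hR1'
    · rw [min_eq_right h]; exact le_trans (min_le_right _ _) hR2'
end

section
/- Let SNR1, SNR2, B be positive reals with SNR2 ≤ (1+SNR1)·SNR1 and SNR1 ≤ SNR2. Then the minimum over the two-user capacity region of max{B/R1, B/R2} equals 2B/log₂(1+SNR1+SNR2), and it is attained at R1 = R2 = log₂(1+SNR1+SNR2)/2. -/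
theorem stmt_6 (SNR1 SNR2 B : ℝ) (h1 : 0 < SNR1) (h2 : 0 < SNR2) (hB : 0 < B)
    (h12 : SNR1 ≤ SNR2) (hsd : SNR2 ≤ (1 + SNR1) * SNR1) :
    IsLeast {v : ℝ | ∃ R1 R2 : ℝ, 0 < R1 ∧ R1 ≤ Real.logb 2 (1 + SNR1) ∧
        0 < R2 ∧ R2 ≤ Real.logb 2 (1 + SNR2) ∧
        R1 + R2 ≤ Real.logb 2 (1 + SNR1 + SNR2) ∧
        v = max (B / R1) (B / R2)}
      (2 * B / Real.logb 2 (1 + SNR1 + SNR2)) ∧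
    (let R := Real.logb 2 (1 + SNR1 + SNR2) / 2
     0 < R ∧ R ≤ Real.logb 2 (1 + SNR1) ∧ R ≤ Real.logb 2 (1 + SNR2) ∧
     R + R ≤ Real.logb 2 (1 + SNR1 + SNR2) ∧
     max (B / R) (B / R) = 2 * B / Real.logb 2 (1 + SNR1 + SNR2)) := by
  set L := Real.logb 2 (1 + SNR1 + SNR2) with hLdef
  have hL : 0 < L := Real.logb_pos one_lt_two (by linarith)
  have hpow : Real.logb 2 ((1 + SNR1) ^ 2) = 2 * Real.logb 2 (1 + SNR1) := by
    rw [Real.logb_pow]; push_cast; ring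
  have hle1 : L / 2 ≤ Real.logb 2 (1 + SNR1) := by
    have h : 1 + SNR1 + SNR2 ≤ (1 + SNR1) ^ 2 := by nlinarith
    have := Real.logb_le_logb_of_le one_lt_two (by linarith) h
    rw [hpow] at this
    linarith [this]
  have hle2 : L / 2 ≤ Real.logb 2 (1 + SNR2) := by
    refine hle1.trans (Real.logb_le_logb_of_le one_lt_two (by linarith) ?_)
    linarith
  have hhalf : 0 < L / 2 := by linarith
  have heq : B / (L / 2) = 2 * B / L := by field_simp
  constructor
  · constructor
    · exact ⟨L / 2, L / 2, hhalf, hle1, hhalf, hle2, by linarith,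
        by rw [max_self, heq]⟩
    · rintro v ⟨R1, R2, hR1, hR1u, hR2, hR2u, hsum, rfl⟩
      rcases le_total R1 R2 with h | h
      · have hR1le : R1 ≤ L / 2 := by linarith
        have : 2 * B / L ≤ B / R1 := by
          rw [← heq]
          exact div_le_div_of_nonneg_left hB.le hR1 hR1le
        exact this.trans (le_max_left _ _)
      · have hR2le : R2 ≤ L / 2 := by linarith
        have : 2 * B / L ≤ B / R2 := by
          rw [← heq]
          exact div_le_div_of_nonneg_left hB.le hR2 hR2le
        exact this.trans (le_max_right _ _)
  · exact ⟨hhalf, hle1, hle2, by linarith, by rw [max_self, heq]⟩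
end

section
/- Let SNR1, SNR2, B be positive reals with SNR1 ≤ SNR2 and SNR2 ≥ (1+SNR1)·SNR1. Then the minimum over the two-user capacity region of max{B/R1, B/R2} equals B/log₂(1+SNR1). -/
theorem stmt_7 (SNR1 SNR2 B : ℝ) (h1 : 0 < SNR1) (h2 : 0 < SNR2) (hB : 0 < B)
    (h12 : SNR1 ≤ SNR2) (hld : SNR2 ≥ (1 + SNR1) * SNR1) :
    IsLeast {v : ℝ | ∃ R1 R2 : ℝ, 0 < R1 ∧ R1 ≤ Real.logb 2 (1 + SNR1) ∧
        0 < R2 ∧ R2 ≤ Real.logb 2 (1 + SNR2) ∧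
        R1 + R2 ≤ Real.logb 2 (1 + SNR1 + SNR2) ∧
        v = max (B / R1) (B / R2)}
      (B / Real.logb 2 (1 + SNR1)) := by
  have hb : (1:ℝ) < 2 := one_lt_two
  have hs1 : (1:ℝ) < 1 + SNR1 := by linarith
  have hL1 : 0 < Real.logb 2 (1 + SNR1) := Real.logb_pos hb hs1
  set L1 := Real.logb 2 (1 + SNR1) with hL1def
  set L2 := Real.logb 2 (1 + SNR2) with hL2def
  set Ls := Real.logb 2 (1 + SNR1 + SNR2) with hLsdef
  have hLs1 : L1 < Ls := by
    apply Real.logb_lt_logb hb (by linarith) (by linarith)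
  have h2L1 : 2 * L1 ≤ Ls := by
    have hsq : (1 + SNR1) * (1 + SNR1) ≤ 1 + SNR1 + SNR2 := by nlinarith
    have : Real.logb 2 ((1 + SNR1) * (1 + SNR1)) ≤ Ls :=
      Real.logb_le_logb_of_le hb (by nlinarith) hsq
    rwa [Real.logb_mul (by linarith) (by linarith), ← two_mul] at this
  have hLsL2 : Ls ≤ L1 + L2 := by
    have hmul : 1 + SNR1 + SNR2 ≤ (1 + SNR1) * (1 + SNR2) := by nlinarith
    have : Ls ≤ Real.logb 2 ((1 + SNR1) * (1 + SNR2)) :=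
      Real.logb_le_logb_of_le hb (by nlinarith) hmul
    rwa [Real.logb_mul (by linarith) (by linarith)] at this
  constructor
  · refine ⟨L1, Ls - L1, hL1, le_refl _, by linarith, by linarith, by linarith, ?_⟩
    have hR2 : L1 ≤ Ls - L1 := by linarith
    have : B / (Ls - L1) ≤ B / L1 :=
      div_le_div_of_nonneg_left hB.le hL1 hR2
    rw [max_eq_left this]
  · rintro v ⟨R1, R2, hR1pos, hR1le, hR2pos, _, _, rfl⟩
    have : B / L1 ≤ B / R1 := div_le_div_of_nonneg_left hB.le hR1pos hR1le
    exact this.trans (le_max_left _ _)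
end

section
/- Let a ≤ b ≤ c ≤ d be positive reals and define τ(x,y) = 1/log₂(1+x+y). Then τ(a,d) + τ(b,c) ≤ τ(a,b) + τ(c,d). -/
open Real

lemma inv_log_deriv {x : ℝ} (hx : 1 < x) :
    HasDerivAt (fun y => (Real.log y)⁻¹) (-(x⁻¹) / (Real.log x)^2) x := by
  have hx0 : x ≠ 0 := by linarith
  have hlog : Real.log x ≠ 0 := ne_of_gt (Real.log_pos hx)
  exact (Real.hasDerivAt_log hx0).inv hlog

lemma inv_log_convex : ConvexOn ℝ (Set.Ioi (1:ℝ)) (fun x => (Real.log x)⁻¹) := by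
  have hint : interior (Set.Ioi (1:ℝ)) = Set.Ioi 1 := interior_Ioi
  have hderiv : ∀ x ∈ Set.Ioi (1:ℝ), deriv (fun y => (Real.log y)⁻¹) x
      = -(x⁻¹) / (Real.log x)^2 := fun x hx => (inv_log_deriv hx).deriv
  refine MonotoneOn.convexOn_of_deriv (convex_Ioi 1) ?_ ?_ ?_
  · intro x hx
    exact ((inv_log_deriv hx).continuousAt).continuousWithinAt
  · rw [hint]
    intro x hx
    exact ((inv_log_deriv hx).differentiableAt).differentiableWithinAt
  · rw [hint]
    intro x hx y hy hxy
    rw [hderiv x hx, hderiv y hy]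
    have hx1 : (1:ℝ) < x := hx
    have hy1 : (1:ℝ) < y := hy
    have hlx : 0 < Real.log x := Real.log_pos hx1
    have hly : 0 < Real.log y := Real.log_pos hy1
    have hll : Real.log x ≤ Real.log y := Real.log_le_log (by linarith) hxy
    have hxpos : (0:ℝ) < x := by linarith
    have hypos : (0:ℝ) < y := by linarith
    have h1 : x * (Real.log x)^2 ≤ y * (Real.log y)^2 :=
      mul_le_mul hxy (pow_le_pow_left₀ hlx.le hll 2) (sq_nonneg _) hypos.le
    have hxl : (0:ℝ) < x * (Real.log x)^2 := by positivity
    have h2 : y⁻¹ / (Real.log y)^2 ≤ x⁻¹ / (Real.log x)^2 := by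
      rw [div_eq_mul_inv, div_eq_mul_inv, ← mul_inv, ← mul_inv]
      exact inv_anti₀ hxl h1
    rw [neg_div, neg_div]
    linarith [h2]

theorem key (p q r s : ℝ) (hp : 1 < p) (hpr : p ≤ r) (hps : p ≤ s)
    (hrq : r ≤ q) (hsum : r + s = p + q) :
    (Real.log r)⁻¹ + (Real.log s)⁻¹ ≤ (Real.log p)⁻¹ + (Real.log q)⁻¹ := by
  rcases eq_or_lt_of_le (hpr.trans hrq) with heq | hpq
  · have hr : r = p := le_antisymm (heq ▸ hrq) hpr
    have hs : s = p := by linarith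
    rw [hr, hs, heq]
  · set l : ℝ := (q - r) / (q - p) with hl
    have hqp : (0:ℝ) < q - p := by linarith
    have hl0 : 0 ≤ l := div_nonneg (by linarith) hqp.le
    have hl1 : l ≤ 1 := by
      rw [div_le_one hqp]; linarith
    have h1l0 : 0 ≤ 1 - l := by linarith
    have hpq1 : (1:ℝ) < q := hpq.trans' hp
    have hpm : p ∈ Set.Ioi (1:ℝ) := hp
    have hqm : q ∈ Set.Ioi (1:ℝ) := hpq1
    have e1 : l * p + (1 - l) * q = r := by
      rw [hl]; field_simp; ring
    have e2 : (1 - l) * p + l * q = s := by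
      rw [hl]; field_simp; nlinarith [hsum]
    have c1 := inv_log_convex.2 hpm hqm hl0 h1l0 (by ring)
    have c2 := inv_log_convex.2 hpm hqm h1l0 hl0 (by ring)
    simp only [smul_eq_mul] at c1 c2
    rw [e1] at c1
    rw [e2] at c2
    linarith

theorem stmt_8 (a b c d : ℝ) (ha : 0 < a) (hab : a ≤ b) (hbc : b ≤ c) (hcd : c ≤ d) :
    1 / Real.logb 2 (1 + a + d) + 1 / Real.logb 2 (1 + b + c) ≤
      1 / Real.logb 2 (1 + a + b) + 1 / Real.logb 2 (1 + c + d) := by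
  have h2 : (0:ℝ) < Real.log 2 := Real.log_pos one_lt_two
  have hk := key (1 + a + b) (1 + c + d) (1 + a + d) (1 + b + c)
    (by linarith) (by linarith) (by linarith) (by linarith) (by ring)
  simp only [Real.logb, one_div_div]
  have : ∀ x : ℝ, Real.log 2 / Real.log x = Real.log 2 * (Real.log x)⁻¹ := fun x => by
    rw [div_eq_mul_inv]
  rw [this, this, this, this]
  nlinarith [hk]
end

section
/- Let a ≤ b ≤ c ≤ d be positive reals and define τ(x,y) = 1/log₂(1+x+y). Then τ(a,d) + τ(b,c) ≤ τ(a,c) + τ(b,d). -/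
open Real Set

lemma invlog_convex : ConvexOn ℝ (Set.Ioi 1) (fun x : ℝ => (Real.log x)⁻¹) := by
  have hderiv : ∀ x ∈ Set.Ioi (1:ℝ),
      HasDerivAt (fun x : ℝ => (Real.log x)⁻¹) (-(x⁻¹ / (Real.log x)^2)) x := by
    intro x hx
    have hx1 : (1:ℝ) < x := hx
    have hlog : Real.log x ≠ 0 := ne_of_gt (Real.log_pos hx1)
    simpa [neg_div, Pi.inv_def] using (Real.hasDerivAt_log (by positivity)).inv hlog
  apply MonotoneOn.convexOn_of_deriv (convex_Ioi 1)
  · exact fun x hx => ((hderiv x hx).continuousAt).continuousWithinAt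
  · rw [interior_Ioi]
    exact fun x hx => ((hderiv x hx).differentiableAt).differentiableWithinAt
  · rw [interior_Ioi]
    intro x hx y hy hxy
    rw [(hderiv x hx).deriv, (hderiv y hy).deriv]
    have hx1 : (1:ℝ) < x := hx
    have hy1 : (1:ℝ) < y := hy
    have hlx : 0 < Real.log x := Real.log_pos hx1
    have hly : 0 < Real.log y := Real.log_pos hy1
    have hxpos : (0:ℝ) < x := by linarith
    have h1 : x⁻¹ / (Real.log x)^2 = 1 / (x * (Real.log x)^2) := by
      field_simp
    have h2 : y⁻¹ / (Real.log y)^2 = 1 / (y * (Real.log y)^2) := by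
      field_simp
    have hle : x * (Real.log x)^2 ≤ y * (Real.log y)^2 := by
      have hlog_le : Real.log x ≤ Real.log y := Real.log_le_log (by linarith) hxy
      have : (Real.log x)^2 ≤ (Real.log y)^2 := by nlinarith
      nlinarith
    have := one_div_le_one_div_of_le (by positivity) hle
    rw [h1, h2]
    linarith

theorem stmt_9 (a b c d : ℝ) (ha : 0 < a) (hab : a ≤ b) (hbc : b ≤ c) (hcd : c ≤ d) :
    1 / Real.logb 2 (1 + a + d) + 1 / Real.logb 2 (1 + b + c) ≤
      1 / Real.logb 2 (1 + a + c) + 1 / Real.logb 2 (1 + b + d) := by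
  have hconv : ConvexOn ℝ (Set.Ioi 1) (fun x : ℝ => Real.log 2 * (Real.log x)⁻¹) := by
    have := invlog_convex.smul (Real.log_nonneg one_le_two)
    simpa [smul_eq_mul] using this
  set f : ℝ → ℝ := fun x => Real.log 2 * (Real.log x)⁻¹ with hf
  have hrw : ∀ t : ℝ, 1 / Real.logb 2 t = f t := by
    intro t
    simp [hf, Real.logb, one_div, div_eq_mul_inv, mul_inv, mul_comm]
  rw [hrw, hrw, hrw, hrw]
  have hb : 0 < b := lt_of_lt_of_le ha hab
  have hc : 0 < c := lt_of_lt_of_le hb hbc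
  have hd : 0 < d := lt_of_lt_of_le hc hcd
  set p : ℝ := 1 + a + c with hp
  set q : ℝ := 1 + b + d with hq
  set x : ℝ := 1 + a + d with hx
  set y : ℝ := 1 + b + c with hy
  have hpmem : p ∈ Set.Ioi (1:ℝ) := by simp [hp]; linarith
  have hqmem : q ∈ Set.Ioi (1:ℝ) := by simp [hq]; linarith
  have hpx : p ≤ x := by simp [hp, hx]; linarith
  have hxq : x ≤ q := by simp [hx, hq]; linarith
  have hpy : p ≤ y := by simp [hp, hy]; linarith
  have hyq : y ≤ q := by simp [hy, hq]; linarith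
  rcases eq_or_lt_of_le (le_trans hpx hxq) with hpq | hpq
  · have hab' : a = b := by
      simp [hp, hq] at hpq; linarith
    have hcd' : c = d := by
      simp [hp, hq] at hpq; linarith
    subst hab'; subst hcd'
    simp [hx, hy, hp, hq]
  · set μ : ℝ := (q - x) / (q - p) with hμ
    have hqp : 0 < q - p := by linarith
    have hμ0 : 0 ≤ μ := by
      apply div_nonneg <;> linarith
    have hμ1 : μ ≤ 1 := by
      rw [hμ, div_le_one hqp]; linarith
    have hxc : x = μ * p + (1 - μ) * q := by
      rw [hμ]; field_simp; ring
    have hyc : y = (1 - μ) * p + μ * q := by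
      rw [hμ]; field_simp; ring
    have h1 : f x ≤ μ * f p + (1 - μ) * f q := by
      have := hconv.2 hpmem hqmem hμ0 (by linarith : (0:ℝ) ≤ 1 - μ) (by ring : μ + (1 - μ) = 1)
      simpa [smul_eq_mul, ← hxc] using this
    have h2 : f y ≤ (1 - μ) * f p + μ * f q := by
      have := hconv.2 hpmem hqmem (by linarith : (0:ℝ) ≤ 1 - μ) hμ0 (by ring : (1 - μ) + μ = 1)
      simpa [smul_eq_mul, ← hyc] using this
    linarith
end

section
/- Let a ≤ b ≤ c ≤ d be positive reals and define σ(x,y) = 1/log₂(1+min{x,y}). Then σ(a,b) + σ(c,d) ≤ σ(a,c) + σ(b,d) and σ(a,b) + σ(c,d) ≤ σ(a,d) + σ(b,c). -/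
theorem stmt_10 (a b c d : ℝ) (ha : 0 < a) (hab : a ≤ b) (hbc : b ≤ c) (hcd : c ≤ d) :
    (1 / Real.logb 2 (1 + min a b) + 1 / Real.logb 2 (1 + min c d) ≤
      1 / Real.logb 2 (1 + min a c) + 1 / Real.logb 2 (1 + min b d)) ∧
    (1 / Real.logb 2 (1 + min a b) + 1 / Real.logb 2 (1 + min c d) ≤
      1 / Real.logb 2 (1 + min a d) + 1 / Real.logb 2 (1 + min b c)) := by
  rw [min_eq_left hab, min_eq_left hcd, min_eq_left (hab.trans hbc),
    min_eq_left hbc, min_eq_left (hbc.trans hcd), min_eq_left (hab.trans (hbc.trans hcd))]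
  have hb : 0 < b := lt_of_lt_of_le ha hab
  have hlb : 0 < Real.logb 2 (1 + b) :=
    Real.logb_pos one_lt_two (by linarith)
  have hle : Real.logb 2 (1 + b) ≤ Real.logb 2 (1 + c) := by
    exact Real.logb_le_logb_of_le one_lt_two (by linarith) (by linarith)
  have key : 1 / Real.logb 2 (1 + c) ≤ 1 / Real.logb 2 (1 + b) :=
    one_div_le_one_div_of_le hlb hle
  constructor <;> linarith
end

section
/- Let N = 2M with M ≥ 1, and let s(1) ≤ s(2) ≤ … ≤ s(N) be positive reals satisfying s(i+1) ≥ (1+s(i))·s(i) for all i. Define σ(x,y) = 1/log₂(1+min{x,y}). Then among all perfect matchings of {1,…,N} into pairs, the ordered matching {1,2},{3,4},…,{N−1,N} minimizes the sum of σ over the pairs. -/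
/-- The SNR-ordered matching on `Fin (2*M)`: pairs `2k` with `2k+1` (0-indexed),
    i.e., devices `2k+1` and `2k+2` in 1-indexed notation. -/
def orderedPair (M : ℕ) : Fin (2 * M) → Fin (2 * M) := fun i =>
  ⟨if i.val % 2 = 0 then i.val + 1 else i.val - 1, by
    have := i.isLt; split <;> omega⟩

lemma card_val_lt {N : ℕ} (c : ℕ) (hc : c ≤ N) :
    (Finset.univ.filter (fun i : Fin N => i.val < c)).card = c := by
  rw [← Finset.card_range c]
  apply Finset.card_bij (fun (i : Fin N) _ => i.val)
  · intro a ha; simp at ha ⊢; exact ha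
  · intro a _ b _ h; exact Fin.val_injective h
  · intro b hb; simp at hb
    exact ⟨⟨b, lt_of_lt_of_le hb hc⟩, by simp [hb], rfl⟩

lemma even_card_of_invol {N : ℕ} (p : Fin N → Fin N) (hp : Function.Involutive p)
    (hnf : ∀ i, p i ≠ i) (S : Finset (Fin N)) (hS : ∀ i ∈ S, p i ∈ S) :
    Even S.card := by
  classical
  have key : (S.filter (fun i => i.val < (p i).val)).card
      = (S.filter (fun i => (p i).val < i.val)).card := by
    apply Finset.card_bij (fun i _ => p i)
    · intro a ha; simp only [Finset.mem_filter] at ha ⊢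
      exact ⟨hS a ha.1, by rw [hp a]; exact ha.2⟩
    · intro a _ b _ h; exact hp.injective h
    · intro b hb; simp only [Finset.mem_filter] at hb
      refine ⟨p b, ?_, hp b⟩
      simp only [Finset.mem_filter, hp b]
      exact ⟨hS b hb.1, hb.2⟩
  have hsplit : S.card = (S.filter (fun i => i.val < (p i).val)).card
      + (S.filter (fun i => (p i).val < i.val)).card := by
    rw [← Finset.card_filter_add_card_filter_not
      (p := fun i => i.val < (p i).val)]
    congr 1
    apply congrArg
    apply Finset.filter_congr
    intro i _
    have : (p i).val ≠ i.val := fun h => hnf i (Fin.val_injective h)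
    simp only [not_lt, eq_iff_iff]
    omega
  rw [hsplit, ← key]
  exact ⟨_, by ring⟩

lemma tele (F : ℕ → ℝ) (K : ℕ) : ∀ m ≤ K,
    ∑ t ∈ Finset.range K, (if m ≤ t then F t - F (t+1) else 0) = F m - F K := by
  induction K with
  | zero => intro m hm; interval_cases m; simp
  | succ K ih =>
    intro m hm
    rw [Finset.sum_range_succ]
    rcases le_or_gt m K with h | h
    · rw [ih m h, if_pos h]; ring
    · have hm' : m = K + 1 := by omega
      subst hm'
      rw [if_neg (by omega)]
      have hz : ∑ t ∈ Finset.range K, (if K + 1 ≤ t then F t - F (t+1) else 0) = 0 := by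
        apply Finset.sum_eq_zero
        intro t ht
        simp only [Finset.mem_range] at ht
        rw [if_neg (by omega)]
      rw [hz]; ring

lemma main_sum (M : ℕ) (F : ℕ → ℝ) (q : Fin (2*M) → Fin (2*M)) :
    ∑ i, F (min i.val (q i).val)
      = (2*M : ℕ) * F (2*M - 1)
        + ∑ t ∈ Finset.range (2*M - 1), (F t - F (t+1)) *
            ((Finset.univ.filter (fun i : Fin (2*M) => min i.val (q i).val ≤ t)).card : ℝ) := by
  have h1 : ∀ i : Fin (2*M), F (min i.val (q i).val)
      = F (2*M - 1) + ∑ t ∈ Finset.range (2*M - 1),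
          (if min i.val (q i).val ≤ t then F t - F (t+1) else 0) := by
    intro i
    rw [tele F (2*M-1) _ (by have := i.isLt; omega)]
    ring
  rw [Finset.sum_congr rfl (fun i _ => h1 i), Finset.sum_add_distrib, Finset.sum_const,
    Finset.card_univ, Fintype.card_fin, Finset.sum_comm]
  congr 1
  · rw [nsmul_eq_mul]
  · apply Finset.sum_congr rfl
    intro t _
    rw [← Finset.sum_filter, Finset.sum_const, nsmul_eq_mul, mul_comm]

theorem stmt_13 (M : ℕ) (hM : 1 ≤ M) (s : Fin (2 * M) → ℝ)
    (hpos : ∀ i, 0 < s i) (hmono : Monotone s)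
    (hld : ∀ i : Fin (2 * M), ∀ h : i.val + 1 < 2 * M,
      s ⟨i.val + 1, h⟩ ≥ (1 + s i) * s i) :
    ∀ p : Fin (2 * M) → Fin (2 * M), Function.Involutive p → (∀ i, p i ≠ i) →
      ∑ i, 1 / Real.logb 2 (1 + min (s i) (s (orderedPair M i))) ≤
        ∑ i, 1 / Real.logb 2 (1 + min (s i) (s (p i))) := by
  intro p hp hnf
  classical
  set F : ℕ → ℝ := fun j => if h : j < 2*M then 1/Real.logb 2 (1 + s ⟨j, h⟩) else 0 with hF
  have hlogpos : ∀ i : Fin (2*M), 0 < Real.logb 2 (1 + s i) := by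
    intro i
    apply Real.logb_pos (by norm_num)
    linarith [hpos i]
  have hterm : ∀ (q : Fin (2*M) → Fin (2*M)) (i : Fin (2*M)),
      1 / Real.logb 2 (1 + min (s i) (s (q i))) = F (min i.val (q i).val) := by
    intro q i
    have hlt : min i.val (q i).val < 2*M := lt_of_le_of_lt (min_le_left _ _) i.isLt
    have h1 : min (s i) (s (q i)) = s ⟨min i.val (q i).val, hlt⟩ := by
      rw [← hmono.map_min]
      congr 1
    rw [h1, hF]
    simp only [dif_pos hlt]
  have hFanti : ∀ j k : ℕ, j ≤ k → k < 2*M → F k ≤ F j := by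
    intro j k hjk hk
    have hj : j < 2*M := lt_of_le_of_lt hjk hk
    rw [hF]
    simp only [dif_pos hj, dif_pos hk]
    apply one_div_le_one_div_of_le (hlogpos ⟨j, hj⟩)
    apply Real.logb_le_logb_of_le (by norm_num) (by linarith [hpos (⟨j, hj⟩ : Fin (2*M))])
    have : s ⟨j, hj⟩ ≤ s ⟨k, hk⟩ := hmono (by exact hjk)
    linarith
  rw [Finset.sum_congr rfl (fun i _ => hterm (orderedPair M) i),
      Finset.sum_congr rfl (fun i _ => hterm p i), main_sum, main_sum]
  apply add_le_add_right
  apply Finset.sum_le_sum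
  intro t ht
  simp only [Finset.mem_range] at ht
  have ht' : t ≤ 2*M - 2 := by omega
  have hd : 0 ≤ F t - F (t+1) := by
    have := hFanti t (t+1) (by omega) (by omega)
    linarith
  apply mul_le_mul_of_nonneg_left _ hd
  have hop : ∀ i : Fin (2*M), min i.val ((orderedPair M) i).val = 2*(i.val/2) := by
    intro i
    simp only [orderedPair]
    split <;> omega
  have hcard_o : ((Finset.univ.filter
      (fun i : Fin (2*M) => min i.val ((orderedPair M) i).val ≤ t)).card : ℕ)
      = 2*(t/2) + 2 := by
    have heq : (Finset.univ.filter
        (fun i : Fin (2*M) => min i.val ((orderedPair M) i).val ≤ t))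
        = Finset.univ.filter (fun i : Fin (2*M) => i.val < 2*(t/2) + 2) := by
      apply Finset.filter_congr
      intro i _
      rw [hop i]
      constructor <;> intro <;> omega
    rw [heq, card_val_lt _ (by omega)]
  have hcard_p : 2*(t/2) + 2
      ≤ (Finset.univ.filter (fun i : Fin (2*M) => min i.val (p i).val ≤ t)).card := by
    have hsub : Finset.univ.filter (fun i : Fin (2*M) => i.val < t+1)
        ⊆ Finset.univ.filter (fun i : Fin (2*M) => min i.val (p i).val ≤ t) := by
      intro i hi
      simp only [Finset.mem_filter, Finset.mem_univ, true_and] at hi ⊢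
      omega
    rcases Nat.even_or_odd t with he | ho
    · -- t even: need one extra element
      obtain ⟨a, ha⟩ := he
      obtain ⟨j, hj1, hj2⟩ : ∃ j : Fin (2*M), t < j.val ∧ (p j).val ≤ t := by
        by_contra hcon
        push_neg at hcon
        have hclosed : ∀ i ∈ Finset.univ.filter (fun i : Fin (2*M) => i.val < t+1),
            p i ∈ Finset.univ.filter (fun i : Fin (2*M) => i.val < t+1) := by
          intro i hi
          simp only [Finset.mem_filter, Finset.mem_univ, true_and] at hi ⊢
          by_contra hgt
          have h2 := hcon (p i) (by omega)
          rw [hp i] at h2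
          omega
        have heven := even_card_of_invol p hp hnf _ hclosed
        rw [card_val_lt (t+1) (by omega)] at heven
        rcases heven with ⟨b, hb⟩
        omega
      have hjnot : j ∉ Finset.univ.filter (fun i : Fin (2*M) => i.val < t+1) := by
        simp only [Finset.mem_filter, Finset.mem_univ, true_and]
        omega
      have hsub2 : insert j (Finset.univ.filter (fun i : Fin (2*M) => i.val < t+1))
          ⊆ Finset.univ.filter (fun i : Fin (2*M) => min i.val (p i).val ≤ t) := by
        intro i hi
        rcases Finset.mem_insert.mp hi with h | h
        · subst h
          simp only [Finset.mem_filter, Finset.mem_univ, true_and]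
          omega
        · exact hsub h
      calc 2*(t/2) + 2 = (t+1) + 1 := by omega
        _ = (insert j (Finset.univ.filter (fun i : Fin (2*M) => i.val < t+1))).card := by
            rw [Finset.card_insert_of_notMem hjnot, card_val_lt (t+1) (by omega)]
        _ ≤ _ := Finset.card_le_card hsub2
    · calc 2*(t/2) + 2 = t + 1 := by rcases ho with ⟨a, ha⟩; omega
        _ = (Finset.univ.filter (fun i : Fin (2*M) => i.val < t+1)).card :=
            (card_val_lt (t+1) (by omega)).symm
        _ ≤ _ := Finset.card_le_card hsub
  rw [hcard_o]
  exact_mod_cast hcard_p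
end

section
/- Let N = 2M with M ≥ 1, and let s(1) ≤ … ≤ s(N) be positive reals satisfying s(N) ≤ (1+s(1))·s(1) (small deviation condition). Define τ(x,y) = 1/log₂(1+x+y). Then among all perfect matchings of {1,…,N} into pairs, the balanced matching {1,N},{2,N−1},…,{M,M+1} minimizes the sum of τ over the pairs. -/
/-- The SNR-balanced matching on `Fin (2*M)`: pairs `i` with `2*M - 1 - i` (0-indexed),
    i.e., device `i` with device `N + 1 - i` in 1-indexed notation. -/
def balancedPair (M : ℕ) : Fin (2 * M) → Fin (2 * M) := fun i =>
  ⟨2 * M - 1 - i.val, by have := i.isLt; omega⟩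

open Real Finset Set

noncomputable def phi (t : ℝ) : ℝ := 1 / Real.logb 2 (1 + t)

lemma phi_eq (t : ℝ) : phi t = Real.log 2 * (Real.log (1 + t))⁻¹ := by
  unfold phi Real.logb
  rw [one_div_div]
  ring

lemma inv_convex_aux {x y a b : ℝ} (hx : 0 < x) (hy : 0 < y)
    (ha : 0 ≤ a) (hb : 0 ≤ b) (hab : a + b = 1) :
    (a * x + b * y)⁻¹ ≤ a * x⁻¹ + b * y⁻¹ := by
  have hpos : 0 < a * x + b * y := by
    rcases eq_or_lt_of_le ha with h | h
    · have hb1 : b = 1 := by linarith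
      rw [← h, hb1]; simpa using hy
    · have := mul_nonneg hb hy.le
      nlinarith
  rw [inv_le_iff_one_le_mul₀ hpos]
  have h1 : (a * x⁻¹ + b * y⁻¹) * (a * x + b * y)
      = 1 + a * b * (x - y) ^ 2 * (x * y)⁻¹ := by
    field_simp
    ring_nf
    linear_combination (x*y*(a+b+1)) * hab
  rw [h1]
  nlinarith [mul_nonneg (mul_nonneg (mul_nonneg ha hb) (sq_nonneg (x - y)))
    (inv_nonneg.2 (mul_pos hx hy).le)]

lemma phi_convexOn : ConvexOn ℝ (Set.Ioi (0:ℝ)) phi := by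
  constructor
  · exact convex_Ioi 0
  · intro u hu v hv a b ha hb hab
    simp only [smul_eq_mul, phi_eq]
    simp only [Set.mem_Ioi] at hu hv
    have hlu : 0 < Real.log (1 + u) := Real.log_pos (by linarith)
    have hlv : 0 < Real.log (1 + v) := Real.log_pos (by linarith)
    have hauv : 0 < a * u + b * v := by
      rcases eq_or_lt_of_le ha with h | h
      · have hb1 : b = 1 := by linarith
        rw [← h, hb1]; simpa using hv
      · nlinarith [mul_nonneg hb hv.le]
    have hconc : a * Real.log (1 + u) + b * Real.log (1 + v)
        ≤ Real.log (1 + (a * u + b * v)) := by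
      have := strictConcaveOn_log_Ioi.concaveOn.2 (Set.mem_Ioi.2 (by linarith : (0:ℝ) < 1 + u))
        (Set.mem_Ioi.2 (by linarith : (0:ℝ) < 1 + v)) ha hb hab
      simp only [smul_eq_mul] at this
      have heq : a * (1 + u) + b * (1 + v) = 1 + (a * u + b * v) := by
        nlinarith
      rw [heq] at this
      exact this
    have hcombo : 0 < a * Real.log (1 + u) + b * Real.log (1 + v) := by
      rcases eq_or_lt_of_le ha with h | h
      · have hb1 : b = 1 := by linarith
        rw [← h, hb1]; simpa using hlv
      · nlinarith [mul_nonneg hb hlv.le]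
    have h1 : (Real.log (1 + (a * u + b * v)))⁻¹
        ≤ (a * Real.log (1 + u) + b * Real.log (1 + v))⁻¹ := by
      apply inv_anti₀ hcombo hconc
    have h2 := inv_convex_aux hlu hlv ha hb hab
    have hl2 : 0 < Real.log 2 := Real.log_pos one_lt_two
    calc Real.log 2 * (Real.log (1 + (a * u + b * v)))⁻¹
        ≤ Real.log 2 * (a * (Real.log (1 + u))⁻¹ + b * (Real.log (1 + v))⁻¹) := by
          apply mul_le_mul_of_nonneg_left (le_trans h1 h2) hl2.le
      _ = a * (Real.log 2 * (Real.log (1 + u))⁻¹) + b * (Real.log 2 * (Real.log (1 + v))⁻¹) := by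
          ring

lemma karamata2 {a b c : ℝ} (ha : 0 < a) (hac : a ≤ c) (hcb : c ≤ b) :
    phi c + phi (a + b - c) ≤ phi a + phi b := by
  rcases eq_or_lt_of_le (le_trans hac hcb) with h | hab
  · have h1 : c = a := le_antisymm (h ▸ hcb) hac
    rw [h1]
    have : a + b - a = b := by ring
    rw [this]
  · set t : ℝ := (b - c) / (b - a) with ht
    have hba : 0 < b - a := by linarith
    have ht0 : 0 ≤ t := div_nonneg (by linarith) hba.le
    have ht1 : t ≤ 1 := (div_le_one hba).2 (by linarith)
    have hc : t * a + (1 - t) * b = c := by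
      rw [ht]
      field_simp
      ring
    have hd : (1 - t) * a + t * b = a + b - c := by
      rw [ht]
      field_simp
      ring
    have hmem1 : a ∈ Set.Ioi (0:ℝ) := ha
    have hmem2 : b ∈ Set.Ioi (0:ℝ) := by simp only [Set.mem_Ioi]; linarith
    have h1 := phi_convexOn.2 hmem1 hmem2 ht0 (by linarith : (0:ℝ) ≤ 1 - t) (by ring)
    have h2 := phi_convexOn.2 hmem1 hmem2 (by linarith : (0:ℝ) ≤ 1 - t) ht0 (by ring)
    simp only [smul_eq_mul] at h1 h2
    rw [hc] at h1
    rw [hd] at h2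
    linarith

lemma bal_invol (M : ℕ) (i : Fin (2*M)) : balancedPair M (balancedPair M i) = i := by
  apply Fin.ext
  have := i.isLt
  show 2*M - 1 - (2*M - 1 - i.val) = i.val
  omega

lemma main_ind (M : ℕ) (s : Fin (2*M) → ℝ) (hpos : ∀ i, 0 < s i) (hmono : Monotone s) :
    ∀ n (p : Fin (2*M) → Fin (2*M)), Function.Involutive p → (∀ i, p i ≠ i) →
    (Finset.univ.filter (fun i => p i ≠ balancedPair M i)).card ≤ n →
    ∑ i, phi (s i + s (balancedPair M i)) ≤ ∑ i, phi (s i + s (p i)) := by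
  intro n
  induction n with
  | zero =>
    intro p hinv hnf hcard
    have hall : ∀ i, p i = balancedPair M i := by
      intro i
      by_contra h
      have hmem : i ∈ Finset.univ.filter (fun i => p i ≠ balancedPair M i) := by simp [h]
      have := Finset.card_pos.2 ⟨i, hmem⟩
      omega
    exact le_of_eq (Finset.sum_congr rfl fun i _ => by rw [hall i])
  | succ n ih =>
    intro p hinv hnf hcard
    by_cases hpb : ∀ i, p i = balancedPair M i
    · exact le_of_eq (Finset.sum_congr rfl fun i _ => by rw [hpb i])
    push_neg at hpb
    obtain ⟨w, hw⟩ := hpb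
    set D := Finset.univ.filter (fun i => p i ≠ balancedPair M i) with hDdef
    have hD : D.Nonempty := ⟨w, by simp [hDdef, hw]⟩
    set i₀ := D.min' hD with hi₀def
    have hi₀D : i₀ ∈ D := D.min'_mem hD
    have hi₀ : p i₀ ≠ balancedPair M i₀ := (Finset.mem_filter.1 hi₀D).2
    have hmin : ∀ j, p j ≠ balancedPair M j → i₀ ≤ j := fun j hj =>
      D.min'_le j (by simp [hDdef, hj])
    have hlt : ∀ j, j < i₀ → p j = balancedPair M j := by
      intro j hj; by_contra h; exact absurd (hmin j h) (not_le.2 hj)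
    have hgt : ∀ j : Fin (2*M), 2*M - 1 < i₀.val + j.val → p j = balancedPair M j := by
      intro j hj
      have hjv : (balancedPair M j).val = 2*M - 1 - j.val := rfl
      have hblt : balancedPair M j < i₀ := by
        rw [Fin.lt_def, hjv]
        have := j.isLt
        omega
      have h1 := hlt _ hblt
      rw [bal_invol] at h1
      calc p j = p (p (balancedPair M j)) := by rw [h1]
        _ = balancedPair M j := hinv _
    have hi₀M : 2 * i₀.val < 2 * M - 1 := by
      by_contra h
      push_neg at h
      have := i₀.isLt
      exact hi₀ (hgt i₀ (by omega))
    set B := balancedPair M i₀ with hBdef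
    set x := p i₀ with hxdef
    set y := p B with hydef
    have hBval : B.val = 2*M - 1 - i₀.val := rfl
    have hi₀lt := i₀.isLt
    have hi₀B : i₀ < B := by rw [Fin.lt_def, hBval]; omega
    have hBi : B ≠ i₀ := ne_of_gt hi₀B
    have hbalB : balancedPair M B = i₀ := bal_invol M i₀
    have hpx : p x = i₀ := hinv i₀
    have hpy : p y = B := hinv B
    have hxB : x ≠ B := hi₀
    have hxi : x ≠ i₀ := hnf i₀
    have hyB : y ≠ B := hnf B
    have hyi : y ≠ i₀ := by
      intro h
      apply hxB
      rw [hxdef, ← h, hydef, hinv]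
    have hyx : y ≠ x := by
      intro h
      apply hBi
      rw [← hpy, h, hpx]
    have hix : i₀ < x := by
      rcases lt_trichotomy x i₀ with h | h | h
      · exfalso
        have h1 := hlt x h
        have h2 : balancedPair M x = i₀ := h1.symm.trans hpx
        exact hxB (by rw [hBdef, ← h2, bal_invol])
      · exact absurd h hxi
      · exact h
    have hxltB : x < B := by
      rcases lt_trichotomy x B with h | h | h
      · exact h
      · exact absurd h hxB
      · exfalso
        have h1 : 2*M - 1 < i₀.val + x.val := by
          rw [Fin.lt_def, hBval] at h
          have := x.isLt
          omega
        have h2 := hgt x h1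
        have h3 : balancedPair M x = i₀ := h2.symm.trans hpx
        exact hxB (by rw [hBdef, ← h3, bal_invol])
    have hiy : i₀ < y := by
      rcases lt_trichotomy y i₀ with h | h | h
      · exfalso
        have h1 := hlt y h
        have h2 : balancedPair M y = B := h1.symm.trans hpy
        have h3 : y = i₀ := by
          calc y = balancedPair M (balancedPair M y) := (bal_invol M y).symm
            _ = balancedPair M B := by rw [h2]
            _ = i₀ := hbalB
        exact hyi h3
      · exact absurd h hyi
      · exact h
    have hyltB : y < B := by
      rcases lt_trichotomy y B with h | h | h
      · exact h
      · exact absurd h hyB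
      · exfalso
        have h1 : 2*M - 1 < i₀.val + y.val := by
          rw [Fin.lt_def, hBval] at h
          have := y.isLt
          omega
        have h2 := hgt y h1
        have h3 : balancedPair M y = B := h2.symm.trans hpy
        have h4 : y = i₀ := by
          calc y = balancedPair M (balancedPair M y) := (bal_invol M y).symm
            _ = balancedPair M B := by rw [h3]
            _ = i₀ := hbalB
        exact hyi h4
    set p' : Fin (2*M) → Fin (2*M) := fun i =>
      if i = i₀ then B else if i = B then i₀ else if i = x then y else
        if i = y then x else p i with hp'def
    have hp'i₀ : p' i₀ = B := by simp [hp'def]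
    have hp'B : p' B = i₀ := by simp [hp'def, hBi]
    have hp'x : p' x = y := by simp [hp'def, hxi, hxB]
    have hp'y : p' y = x := by simp [hp'def, hyi, hyB, hyx]
    have hp'o : ∀ i, i ≠ i₀ → i ≠ B → i ≠ x → i ≠ y → p' i = p i := by
      intro i h1 h2 h3 h4; simp [hp'def, h1, h2, h3, h4]
    have hp4 : ∀ i, i ≠ i₀ → i ≠ B → i ≠ x → i ≠ y →
        p i ≠ i₀ ∧ p i ≠ B ∧ p i ≠ x ∧ p i ≠ y := by
      intro i h1 h2 h3 h4
      refine ⟨fun h => h3 ?_, fun h => h4 ?_, fun h => h1 ?_, fun h => h2 ?_⟩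
      · calc i = p (p i) := (hinv i).symm
          _ = p i₀ := by rw [h]
          _ = x := hxdef.symm
      · calc i = p (p i) := (hinv i).symm
          _ = p B := by rw [h]
          _ = y := hydef.symm
      · calc i = p (p i) := (hinv i).symm
          _ = p x := by rw [h]
          _ = i₀ := hpx
      · calc i = p (p i) := (hinv i).symm
          _ = p y := by rw [h]
          _ = B := hpy
    have hp'inv : Function.Involutive p' := by
      intro i
      by_cases h1 : i = i₀
      · rw [h1, hp'i₀, hp'B]
      by_cases h2 : i = B
      · rw [h2, hp'B, hp'i₀]
      by_cases h3 : i = x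
      · rw [h3, hp'x, hp'y]
      by_cases h4 : i = y
      · rw [h4, hp'y, hp'x]
      · obtain ⟨k1, k2, k3, k4⟩ := hp4 i h1 h2 h3 h4
        rw [hp'o i h1 h2 h3 h4, hp'o (p i) k1 k2 k3 k4, hinv]
    have hp'nf : ∀ i, p' i ≠ i := by
      intro i
      by_cases h1 : i = i₀
      · rw [h1, hp'i₀]; exact hBi
      by_cases h2 : i = B
      · rw [h2, hp'B]; exact Ne.symm hBi
      by_cases h3 : i = x
      · rw [h3, hp'x]; exact hyx
      by_cases h4 : i = y
      · rw [h4, hp'y]; exact Ne.symm hyx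
      · rw [hp'o i h1 h2 h3 h4]; exact hnf i
    have hsub : Finset.univ.filter (fun i => p' i ≠ balancedPair M i) ⊆ D.erase i₀ := by
      intro i hi
      rw [Finset.mem_filter] at hi
      have hi2 := hi.2
      rw [Finset.mem_erase]
      by_cases h1 : i = i₀
      · exact absurd (by rw [h1, hp'i₀, hBdef]) hi2
      by_cases h2 : i = B
      · exact absurd (by rw [h2, hp'B, hbalB]) hi2
      refine ⟨h1, ?_⟩
      rw [hDdef, Finset.mem_filter]
      refine ⟨Finset.mem_univ i, ?_⟩
      by_cases h3 : i = x
      · rw [h3, hpx]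
        intro h
        exact hxB (by rw [hBdef, h, bal_invol])
      by_cases h4 : i = y
      · rw [h4, hpy]
        intro h
        apply hyi
        calc y = balancedPair M (balancedPair M y) := (bal_invol M y).symm
          _ = balancedPair M B := by rw [← h]
          _ = i₀ := hbalB
      · rw [hp'o i h1 h2 h3 h4] at hi2
        exact hi2
    have hcard' : (Finset.univ.filter (fun i => p' i ≠ balancedPair M i)).card ≤ n := by
      have h1 := Finset.card_le_card hsub
      have h2 : (D.erase i₀).card = D.card - 1 := Finset.card_erase_of_mem hi₀D
      have h3 : 1 ≤ D.card := Finset.card_pos.2 hD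
      omega
    refine le_trans (ih p' hp'inv hp'nf hcard') ?_
    set T : Finset (Fin (2*M)) := {i₀, B, x, y} with hTdef
    have hTsub : T ⊆ Finset.univ := Finset.subset_univ T
    rw [← Finset.sum_sdiff hTsub (f := fun i => phi (s i + s (p' i))),
        ← Finset.sum_sdiff hTsub (f := fun i => phi (s i + s (p i)))]
    apply add_le_add
    · apply le_of_eq
      apply Finset.sum_congr rfl
      intro i hi
      rw [Finset.mem_sdiff, hTdef] at hi
      have h := hi.2
      simp only [Finset.mem_insert, Finset.mem_singleton] at h
      push_neg at h
      rw [hp'o i h.1 h.2.1 h.2.2.1 h.2.2.2]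
    · have hTsum : ∀ q : Fin (2*M) → Fin (2*M), ∑ i ∈ T, phi (s i + s (q i)) =
          phi (s i₀ + s (q i₀)) + phi (s B + s (q B)) + phi (s x + s (q x))
            + phi (s y + s (q y)) := by
        intro q
        have h1 : i₀ ∉ ({B, x, y} : Finset (Fin (2*M))) := by
          simp only [Finset.mem_insert, Finset.mem_singleton]
          push_neg
          exact ⟨Ne.symm hBi, Ne.symm hxi, Ne.symm hyi⟩
        have h2 : B ∉ ({x, y} : Finset (Fin (2*M))) := by
          simp only [Finset.mem_insert, Finset.mem_singleton]
          push_neg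
          exact ⟨Ne.symm hxB, Ne.symm hyB⟩
        have h3 : x ∉ ({y} : Finset (Fin (2*M))) := by
          simp only [Finset.mem_singleton]
          exact Ne.symm hyx
        rw [hTdef, Finset.sum_insert h1, Finset.sum_insert h2, Finset.sum_insert h3,
          Finset.sum_singleton]
        ring
      rw [hTsum p', hTsum p, hp'i₀, hp'B, hp'x, hp'y, ← hxdef, ← hydef, hpx, hpy]
      have ha : 0 < s i₀ + s x := add_pos (hpos i₀) (hpos x)
      have hac : s i₀ + s x ≤ s i₀ + s B := by
        have := hmono hxltB.le
        linarith
      have hcb : s i₀ + s B ≤ s B + s y := by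
        have := hmono hiy.le
        linarith
      have hk := karamata2 ha hac hcb
      have hsum : s i₀ + s x + (s B + s y) - (s i₀ + s B) = s x + s y := by ring
      rw [hsum] at hk
      have e1 : s B + s i₀ = s i₀ + s B := add_comm _ _
      have e2 : s y + s x = s x + s y := add_comm _ _
      have e3 : s x + s i₀ = s i₀ + s x := add_comm _ _
      have e4 : s y + s B = s B + s y := add_comm _ _
      rw [e1, e2, e3, e4]
      linarith

theorem stmt_14 (M : ℕ) (hM : 1 ≤ M) (s : Fin (2 * M) → ℝ)
    (hpos : ∀ i, 0 < s i) (hmono : Monotone s)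
    (hsd : s ⟨2 * M - 1, by omega⟩ ≤ (1 + s ⟨0, by omega⟩) * s ⟨0, by omega⟩) :
    ∀ p : Fin (2 * M) → Fin (2 * M), Function.Involutive p → (∀ i, p i ≠ i) →
      ∑ i, 1 / Real.logb 2 (1 + s i + s (balancedPair M i)) ≤
        ∑ i, 1 / Real.logb 2 (1 + s i + s (p i)) := by
  intro p hinv hnf
  have h := main_ind M s hpos hmono
    ((Finset.univ.filter (fun i => p i ≠ balancedPair M i)).card) p hinv hnf le_rfl
  simpa [phi, add_assoc] using h
end

section
/- For positive reals a, b, c, d with a ≤ c, b ≤ d, and a+b, a+d, c+b, c+d all positive, the following holds: log₂(1+b+c)·log₂(1+c+d)·log₂((1+a+d)/(1+a+b)) ≥ log₂(1+a+b)·log₂(1+a+d)·log₂((1+c+d)/(1+b+c)), where a = SNR1, b = SNR2, c = SNR3, d = SNR4 with SNR1 ≤ SNR2 ≤ SNR3 ≤ SNR4. -/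
lemma key_ineq (w x y z : ℝ) (hw : 0 < w) (hwx : w ≤ x) (hwy : w ≤ y)
    (hxz : x ≤ z) (hyz : y ≤ z) (hsum : w + z ≤ x + y) :
    x * z * (y - w) ≥ w * y * (z - x) := by
  have h1 : 0 ≤ y * z - w * x := by nlinarith
  have h2 : 0 ≤ z - y := by linarith
  have h3 : 0 ≤ (x - w) - (z - y) := by linarith
  nlinarith [mul_nonneg h1 h2,
    mul_nonneg h3 (mul_nonneg (by linarith : (0:ℝ) ≤ y) (by linarith : (0:ℝ) ≤ z))]

theorem stmt_15 (a b c d : ℝ) (ha : 0 < a) (hb : 0 < b) (hc : 0 < c) (hd : 0 < d)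
    (hab : a ≤ b) (hbc : b ≤ c) (hcd : c ≤ d) :
    Real.logb 2 (1 + b + c) * Real.logb 2 (1 + c + d) *
        Real.logb 2 ((1 + a + d) / (1 + a + b)) ≥
      Real.logb 2 (1 + a + b) * Real.logb 2 (1 + a + d) *
        Real.logb 2 ((1 + c + d) / (1 + b + c)) := by
  have h2 : (1:ℝ) < 2 := one_lt_two
  have pab : (1:ℝ) < 1 + a + b := by linarith
  have pbc : (1:ℝ) < 1 + b + c := by linarith
  have pad : (1:ℝ) < 1 + a + d := by linarith
  have pcd : (1:ℝ) < 1 + c + d := by linarith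
  set w := Real.logb 2 (1 + a + b) with hwdef
  set x := Real.logb 2 (1 + b + c) with hxdef
  set y := Real.logb 2 (1 + a + d) with hydef
  set z := Real.logb 2 (1 + c + d) with hzdef
  have hw : 0 < w := Real.logb_pos h2 pab
  have hwx : w ≤ x := Real.logb_le_logb_of_le h2 (by linarith) (by linarith)
  have hwy : w ≤ y := Real.logb_le_logb_of_le h2 (by linarith) (by linarith)
  have hxz : x ≤ z := Real.logb_le_logb_of_le h2 (by linarith) (by linarith)
  have hyz : y ≤ z := Real.logb_le_logb_of_le h2 (by linarith) (by linarith)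
  have hprod : (1 + a + b) * (1 + c + d) ≤ (1 + b + c) * (1 + a + d) := by
    nlinarith [mul_nonneg (show (0:ℝ) ≤ c - a by linarith) (show (0:ℝ) ≤ d - b by linarith)]
  have hsum : w + z ≤ x + y := by
    have h1 := Real.logb_le_logb_of_le h2 (by positivity) hprod
    rw [Real.logb_mul (by positivity) (by positivity),
        Real.logb_mul (by positivity) (by positivity)] at h1
    exact h1
  rw [Real.logb_div (by positivity) (by positivity),
      Real.logb_div (by positivity) (by positivity)]
  exact key_ineq w x y z hw hwx hwy hxz hyz hsum
end
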